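/- In ∧²V_aff, for all 1 ≤ ε ≤ N, 1 ≤ a ≤ L and all integers m₁ ≥ m₂, one has u_{ε−N(a+Lm₁)} ∧ u_{ε−N(a+Lm₂)} = − u_{ε−N(a+Lm₂)} ∧ u_{ε−N(a+Lm₁)} (the first of the normal ordering rules). -/

import Mathlib

noncomputable section

namespace QT

abbrev K : Type := RatFunc ℚ

def q : K := RatFunc.X

/-- `x` is a Laurent polynomial in `q` with rational coefficients. -/
def IsLaurent (x : K) : Prop :=
  ∃ c : ℤ →₀ ℚ, x = c.sum fun m a => (a : K) * q ^ m

def qint (k : ℕ) : K := (q ^ k - q⁻¹ ^ k) / (q - q⁻¹)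

def qfact : ℕ → K
  | 0 => 1
  | k + 1 => qint (k + 1) * qfact k

def qbinom (m k : ℕ) : K := qfact m / (qfact (m - k) * qfact k)

def indZ {α : Type*} [DecidableEq α] (x y : α) : ℤ := if x = y then 1 else 0

/-- The representative in `{1, …, m}` of a residue class: `rk 0 = m`, `rk x = x.val` otherwise. -/
def rk {m : ℕ} (x : ZMod m) : ℕ := if x = 0 then m else x.val

/-- Cartan matrix of affine sl_M. -/
def aijZ (Mz : ℕ) (i j : ZMod Mz) : ℤ := 2 * indZ i j - indZ i (j + 1) - indZ i (j - 1)

/-- The representative `ε ∈ {1, …, N}` for the basis vector `u_k = z^m e_a v_ε`. -/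
def epsRep (N : ℕ) (k : ℤ) : ℤ := (k - 1) % (N : ℤ) + 1

def tRep (N : ℕ) (k : ℤ) : ℤ := (epsRep N k - k) / (N : ℤ)

/-- The representative `a ∈ {1, …, L}` for the basis vector `u_k = z^m e_a v_ε`. -/
def aRep (L N : ℕ) (k : ℤ) : ℤ := (tRep N k - 1) % (L : ℤ) + 1

/-- The exponent `m` for the basis vector `u_k = z^m e_a v_ε`. -/
def mRep (L N : ℕ) (k : ℤ) : ℤ := (tRep N k - aRep L N k) / (L : ℤ)

/-- Index of one tensor factor: an exponent `m ∈ ℤ`, an `sl_L`-colour (the index of `e_a`,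
read modulo `L`), and extra data `C` (the `sl_N`-colour, or `Unit`). -/
abbrev Idx (L : ℕ) (C : Type) : Type := ℤ × ZMod L × C

/-- The model of the `n`-fold tensor power `(K[z^{±1}] ⊗ K^L ⊗ C)^{⊗ n}`:
the free `K`-module on monomials. -/
abbrev Sp (L : ℕ) (C : Type) (n : ℕ) : Type := (Fin n → Idx L C) →₀ K

/-- The index triple of the basis vector `u_k = z^m e_a v_ε`, `k = ε - N(a + Lm)`. -/
def uIdx (L N : ℕ) (k : ℤ) : Idx L (ZMod N) :=
  (mRep L N k, ((aRep L N k : ℤ) : ZMod L), ((k : ℤ) : ZMod N))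

section core

variable (L : ℕ) (C : Type) (n : ℕ)

/-- basis monomial -/
def bs (g : Fin n → Idx L C) : Sp L C n := Finsupp.single g 1

/-- lift a rule on basis monomials to a linear map -/
def lift {V : Type} [AddCommGroup V] [Module K V] (h : (Fin n → Idx L C) → V) :
    Sp L C n →ₗ[K] V :=
  Finsupp.lsum K fun g => LinearMap.toSpanSingleton K V (h g)

/-- multiply the `j`-th exponent data by `z_j^m` -/
def zI (g : Fin n → Idx L C) (j : Fin n) (m : ℤ) : Fin n → Idx L C :=
  Function.update g j ((g j).1 + m, (g j).2)

/-- multiplication by `z_j^m` -/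
def zmF (j : Fin n) (m : ℤ) : Module.End K (Sp L C n) :=
  Finsupp.lmapDomain K K fun g => zI L C n g j m

/-- multiplication by `z_{t+1}^m` (`t` a natural number index, identity if out of range) -/
def zmT (t : ℕ) (m : ℤ) : Module.End K (Sp L C n) :=
  if h : t < n then zmF L C n ⟨t, h⟩ m else 1

/-- the power sum `B_m^{(n)} = z_1^m + ⋯ + z_n^m` -/
def Ball (m : ℤ) : Module.End K (Sp L C n) := ∑ j : Fin n, zmF L C n j m

/-- exchange the `(z, K^L)`-data at sites `i` and `j`, keeping the `C`-data -/
def swapZL (g : Fin n → Idx L C) (i j : Fin n) : Fin n → Idx L C := fun t =>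
  if t = i then ((g j).1, (g j).2.1, (g t).2.2)
  else if t = j then ((g i).1, (g i).2.1, (g t).2.2)
  else g t

/-- the exchange operator `s` of the `(z, K^L)`-factors at sites `i`, `j` -/
def SopF (i j : Fin n) : Module.End K (Sp L C n) :=
  Finsupp.lmapDomain K K fun g => swapZL L C n g i j

def SopT (t : ℕ) : Module.End K (Sp L C n) :=
  if h : t + 1 < n then SopF L C n ⟨t, by omega⟩ ⟨t + 1, h⟩ else 1

/-- exchange only the `K^L`-colours at sites `i`, `j` -/
def cswap (g : Fin n → Idx L C) (i j : Fin n) : Fin n → Idx L C := fun t =>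
  if t = i then ((g t).1, (g j).2.1, (g t).2.2)
  else if t = j then ((g t).1, (g i).2.1, (g t).2.2)
  else g t

/-- the trigonometric R-matrix `R(z_i, z_j)` acting in the factors `i`, `j` -/
def RopF (i j : Fin n) : Module.End K (Sp L C n) :=
  lift L C n fun g =>
    if (g i).2.1 = (g j).2.1 then
      q ^ 2 • bs L C n (zI L C n g i 1) - bs L C n (zI L C n g j 1)
    else
      q • bs L C n (zI L C n g i 1) - q • bs L C n (zI L C n g j 1) +
        (q ^ 2 - 1) •
          (if rk ((g j).2.1) < rk ((g i).2.1) then bs L C n (zI L C n (cswap L C n g i j) i 1)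
           else bs L C n (zI L C n (cswap L C n g i j) j 1))

/-- `T` is the matrix Demazure–Lusztig operator `T^c` acting in the factors `i`, `j`:
this is the (multiplied out, denominator–free) form of
`T^c = ((z_i - q² z_j)/(z_i - z_j)) (1 - s R(z_i,z_j)/(q² z_i - z_j)) - 1`,
which determines `T` uniquely. -/
def IsTcAt (i j : Fin n) (T : Module.End K (Sp L C n)) : Prop :=
  (zmF L C n i 1 - zmF L C n j 1) * (q ^ 2 • zmF L C n j 1 - zmF L C n i 1) * (T + 1) =
    (zmF L C n i 1 - q ^ 2 • zmF L C n j 1) *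
      ((q ^ 2 • zmF L C n j 1 - zmF L C n i 1) - SopF L C n i j * RopF L C n i j)

/-- `Tc t` is the Demazure–Lusztig operator `T^c_{t+1}` in factors `(t, t+1)` (0-based),
for every meaningful `t`. -/
def HTc (Tc : ℕ → Module.End K (Sp L C n)) : Prop :=
  ∀ (t : ℕ) (h : t + 1 < n), IsTcAt L C n ⟨t, by omega⟩ ⟨t + 1, h⟩ (Tc t)

/-- weight datum for `K̇_a` at one site of colour `b` -/
def wtL (a b : ZMod L) : ℤ := indZ b (1 - a) - indZ b (-a)

/-- `K̇_a` extended to `n` factors -/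
def KdOp (a : ZMod L) : Module.End K (Sp L C n) :=
  lift L C n fun g => (q ^ (∑ j : Fin n, wtL L a ((g j).2.1)) : K) • bs L C n g

/-- `K̇_a⁻¹` extended to `n` factors -/
def KdInv (a : ZMod L) : Module.End K (Sp L C n) :=
  lift L C n fun g => (q ^ (-∑ j : Fin n, wtL L a ((g j).2.1)) : K) • bs L C n g

/-- `Ė_a` extended to `n` factors by the coproduct `Δ⁻` -/
def EdOp (a : ZMod L) : Module.End K (Sp L C n) :=
  lift L C n fun g =>
    ∑ j : Fin n,
      if (g j).2.1 = -a then
        (q ^ (∑ j' : Fin n, if (j' : ℕ) < (j : ℕ) then wtL L a ((g j').2.1) else 0) : K) •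
          bs L C n (Function.update g j
            ((g j).1 + (if a = 0 then 1 else 0), (g j).2.1 + 1, (g j).2.2))
      else 0

/-- `Ḟ_a` extended to `n` factors by the coproduct `Δ⁻` -/
def FdOp (a : ZMod L) : Module.End K (Sp L C n) :=
  lift L C n fun g =>
    ∑ j : Fin n,
      if (g j).2.1 = 1 - a then
        (q ^ (-∑ j' : Fin n, if (j : ℕ) < (j' : ℕ) then wtL L a ((g j').2.1) else 0) : K) •
          bs L C n (Function.update g j
            ((g j).1 - (if a = 0 then 1 else 0), (g j).2.1 - 1, (g j).2.2))
      else 0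

/-- the degree operator `D` (and `Ḋ`) on `n` factors -/
def DOp : Module.End K (Sp L C n) :=
  lift L C n fun g => ((∑ j : Fin n, (g j).1 : ℤ) : K) • bs L C n g

/-- the one-site operator `(K̇_a)_{t+1}` -/
def KdOne (t : ℕ) (a : ZMod L) : Module.End K (Sp L C n) :=
  if h : t < n then
    lift L C n fun g => (q ^ wtL L a ((g ⟨t, h⟩).2.1) : K) • bs L C n g
  else 1

/-- the one-site operator `(Ḟ_a)_{t+1}` -/
def FdOne (t : ℕ) (a : ZMod L) : Module.End K (Sp L C n) :=
  if h : t < n then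
    lift L C n fun g =>
      if (g ⟨t, h⟩).2.1 = 1 - a then
        bs L C n (Function.update g ⟨t, h⟩
          ((g ⟨t, h⟩).1 - (if a = 0 then 1 else 0), (g ⟨t, h⟩).2.1 - 1, (g ⟨t, h⟩).2.2))
      else 0
  else 1

/-- `(p^D)_1` with `p = q^pz` -/
def pDOp (pz : ℤ) : Module.End K (Sp L C n) :=
  if h : 0 < n then
    lift L C n fun g => (q ^ (pz * (g ⟨0, h⟩).1) : K) • bs L C n g
  else 1

/-- `(q^{ν∨})_1` -/
def qnuOp (nu : ℕ → ℤ) : Module.End K (Sp L C n) :=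
  if h : 0 < n then
    lift L C n fun g => (q ^ nu (L + 1 - rk ((g ⟨0, h⟩).2.1)) : K) • bs L C n g
  else 1

/-- the matrix Cherednik–Dunkl operator `Y_{j+1}^{(n)}` (0-based `j`), built from
`T̃_{t,t+1} = -q (T^c_t)⁻¹` (so `T̃ = -q • Tci t`, `T̃⁻¹ = -q⁻¹ • Tc t`). -/
def Yop (pz : ℤ) (nu : ℕ → ℤ) (Tc Tci : ℕ → Module.End K (Sp L C n)) (j : ℕ) :
    Module.End K (Sp L C n) :=
  ((List.range' j (n - 1 - j)).map fun t => (-q⁻¹) • Tc t).prod *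
    ((List.range (n - 1)).reverse.map fun t => SopT L C n t).prod *
      pDOp L C n pz * qnuOp L C n nu *
        ((List.range j).map fun t => (-q) • Tci t).prod

end core

section nsector

variable (L N n : ℕ)

/-- The model of `V_aff^{⊗n}` where `V_aff = K[z^{±1}] ⊗ K^L ⊗ K^N`. -/
abbrev W : Type := Sp L (ZMod N) n

/-- exchange only the `K^N`-colours at sites `i`, `j` -/
def nswap (g : Fin n → Idx L (ZMod N)) (i j : Fin n) : Fin n → Idx L (ZMod N) := fun t =>
  if t = i then ((g t).1, (g t).2.1, (g j).2.2)
  else if t = j then ((g t).1, (g t).2.1, (g i).2.2)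
  else g t

/-- the Jimbo operator `T^s` acting in the `K^N`-factors `i`, `j` -/
def TsF (i j : Fin n) : Module.End K (W L N n) :=
  lift L (ZMod N) n fun g =>
    if (g i).2.2 = (g j).2.2 then q ^ 2 • bs L (ZMod N) n g
    else if rk ((g i).2.2) < rk ((g j).2.2) then q • bs L (ZMod N) n (nswap L N n g i j)
    else q • bs L (ZMod N) n (nswap L N n g i j) + (q ^ 2 - 1) • bs L (ZMod N) n g

def TsT (t : ℕ) : Module.End K (W L N n) :=
  if h : t + 1 < n then TsF L N n ⟨t, by omega⟩ ⟨t + 1, h⟩ else 1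

/-- weight datum for `K_i` at one site of colour `c` -/
def wtN (i c : ZMod N) : ℤ := indZ c i - indZ c (i + 1)

/-- `K_i` extended to `n` factors -/
def KOp (i : ZMod N) : Module.End K (W L N n) :=
  lift L (ZMod N) n fun g =>
    (q ^ (∑ j : Fin n, wtN N i ((g j).2.2)) : K) • bs L (ZMod N) n g

/-- `K_i⁻¹` extended to `n` factors -/
def KInv (i : ZMod N) : Module.End K (W L N n) :=
  lift L (ZMod N) n fun g =>
    (q ^ (-∑ j : Fin n, wtN N i ((g j).2.2)) : K) • bs L (ZMod N) n g

/-- `E_i` extended to `n` factors by the coproduct `Δ⁺` -/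
def EOp (i : ZMod N) : Module.End K (W L N n) :=
  lift L (ZMod N) n fun g =>
    ∑ j : Fin n,
      if (g j).2.2 = i + 1 then
        (q ^ (∑ j' : Fin n, if (j : ℕ) < (j' : ℕ) then wtN N i ((g j').2.2) else 0) : K) •
          bs L (ZMod N) n (Function.update g j
            ((g j).1 + (if i = 0 then 1 else 0), (g j).2.1, (g j).2.2 - 1))
      else 0

/-- `F_i` extended to `n` factors by the coproduct `Δ⁺` -/
def FOp (i : ZMod N) : Module.End K (W L N n) :=
  lift L (ZMod N) n fun g =>
    ∑ j : Fin n,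
      if (g j).2.2 = i then
        (q ^ (-∑ j' : Fin n, if (j' : ℕ) < (j : ℕ) then wtN N i ((g j').2.2) else 0) : K) •
          bs L (ZMod N) n (Function.update g j
            ((g j).1 - (if i = 0 then 1 else 0), (g j).2.1, (g j).2.2 + 1))
      else 0

/-- the submodule `Σ_i Im(T^c_i - T^s_i)` defining the wedge product -/
def Jmod (Tc : ℕ → Module.End K (W L N n)) : Submodule K (W L N n) :=
  ⨆ t : Fin (n - 1), LinearMap.range (Tc t - TsT L N n t)

/-- the `n`-fold q-wedge product `∧ⁿ V_aff` -/
abbrev WedgeSp (Tc : ℕ → Module.End K (W L N n)) : Type := W L N n ⧸ Jmod L N n Tc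

/-- the image of a basis monomial in the wedge product -/
def wedgeB (Tc : ℕ → Module.End K (W L N n)) (g : Fin n → Idx L (ZMod N)) :
    WedgeSp L N n Tc :=
  Submodule.Quotient.mk (bs L (ZMod N) n g)

/-- the wedge `u_{k_1} ∧ ⋯ ∧ u_{k_n}` -/
def wedgeV (Tc : ℕ → Module.End K (W L N n)) (ks : Fin n → ℤ) : WedgeSp L N n Tc :=
  wedgeB L N n Tc fun j => uIdx L N (ks j)

/-- the one-site matrix part of the vertical `E_i` at site `j` -/
def matE (i : ZMod N) (j : Fin n) : Module.End K (W L N n) :=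
  lift L (ZMod N) n fun g =>
    if (g j).2.2 = i + 1 then
      (q ^ (∑ j' : Fin n, if (j : ℕ) < (j' : ℕ) then wtN N i ((g j').2.2) else 0) : K) •
        bs L (ZMod N) n (Function.update g j ((g j).1, (g j).2.1, (g j).2.2 - 1))
    else 0

/-- the one-site matrix part of the vertical `F_i` at site `j` -/
def matF (i : ZMod N) (j : Fin n) : Module.End K (W L N n) :=
  lift L (ZMod N) n fun g =>
    if (g j).2.2 = i then
      (q ^ (-∑ j' : Fin n, if (j' : ℕ) < (j : ℕ) then wtN N i ((g j').2.2) else 0) : K) •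
        bs L (ZMod N) n (Function.update g j ((g j).1, (g j).2.1, (g j).2.2 + 1))
    else 0

/-- the (pre-quotient) vertical action of `E_i`:
`Σ_j (q^{-n̄} Y_j)^{-δ(i=0)} ⊗ (e_{i,i+1})_j (k_i)_{j+1} ⋯ (k_i)_n`;
here `Yi j` is the inverse of `Y_{j+1}^{(n)}`. -/
def Evert (Yi : ℕ → Module.End K (W L N n)) (nb : ℤ) (i : ZMod N) :
    Module.End K (W L N n) :=
  if i = 0 then ∑ j : Fin n, matE L N n i j * ((q ^ nb : K) • Yi (j : ℕ))
  else ∑ j : Fin n, matE L N n i j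

/-- the (pre-quotient) vertical action of `F_i`:
`Σ_j (q^{-n̄} Y_j)^{δ(i=0)} ⊗ (e_{i+1,i})_j (k_i⁻¹)_1 ⋯ (k_i⁻¹)_{j-1}`. -/
def Fvert (pz : ℤ) (nu : ℕ → ℤ) (Tc Tci : ℕ → Module.End K (W L N n)) (nb : ℤ)
    (i : ZMod N) : Module.End K (W L N n) :=
  if i = 0 then
    ∑ j : Fin n, matF L N n i j * ((q ^ (-nb) : K) • Yop L (ZMod N) n pz nu Tc Tci (j : ℕ))
  else ∑ j : Fin n, matF L N n i j

/-- the padding map `v ↦ v ∧ u_{M-a} ∧ u_{M-a-1} ∧ ⋯ ∧ u_{M-b+1}` (before the quotient) -/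
def padW (M : ℤ) (a b : ℕ) : W L N a →ₗ[K] W L N b :=
  Finsupp.lmapDomain K K fun g => fun jj : Fin b =>
    if h : (jj : ℕ) < a then g ⟨jj, h⟩ else uIdx L N (M - (jj : ℕ))

/-- the inductive limit of the spaces `V_aff^{⊗n}` along `v ↦ v ∧ u_{M-n}` -/
abbrev FockPre (M : ℤ) : Type :=
  Module.DirectLimit (fun m : ℕ => W L N m) fun a b _ => padW L N M a b

instance FockPre.instAddCommGroup (M : ℤ) : AddCommGroup (FockPre L N M) :=
  Module.DirectLimit.addCommGroup _ _

def ofPre (M : ℤ) (m : ℕ) : W L N m →ₗ[K] FockPre L N M :=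
  Module.DirectLimit.of K ℕ (fun m : ℕ => W L N m) (fun a b _ => padW L N M a b) m

/-- the limit of the wedge relations inside `FockPre` -/
def JFock (M : ℤ) (Tc : (m : ℕ) → ℕ → Module.End K (W L N m)) :
    Submodule K (FockPre L N M) :=
  ⨆ m : ℕ, Submodule.map (ofPre L N M m) (Jmod L N m (Tc m))

/-- the Fock space `F_M`: the inductive limit of the wedge products `∧ⁿ V_aff` -/
abbrev Fock (M : ℤ) (Tc : (m : ℕ) → ℕ → Module.End K (W L N m)) : Type :=
  FockPre L N M ⧸ JFock L N M Tc

/-- the canonical map `∧ⁿ`-representatives → `F_M`; `iq n v = v ∧ u_{M-n} ∧ u_{M-n-1} ∧ ⋯` -/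
def iq (M : ℤ) (Tc : (m : ℕ) → ℕ → Module.End K (W L N m)) (m : ℕ) :
    W L N m →ₗ[K] Fock L N M Tc :=
  (JFock L N M Tc).mkQ ∘ₗ ofPre L N M m

/-- concatenation of wedges (on representatives) -/
def concat {a b : ℕ} (x : W L N a) (y : W L N b) : W L N (a + b) :=
  x.sum fun g c => y.sum fun g' c' => (c * c') • bs L (ZMod N) (a + b) (Fin.append g g')

/-- the vacuum block `u_{-NLm} ∧ u_{-NLm-1} ∧ ⋯ ∧ u_{-NL(m+1)+1}` (as a representative) -/
def vacBlock (m : ℤ) : W L N (N * L) :=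
  bs L (ZMod N) (N * L) fun j => uIdx L N (-((N : ℤ) * (L : ℤ)) * m - (j : ℕ))

/-- a semi-infinite decreasing sequence of momenta with `k_i = M - i` (0-based) eventually -/
def MayaP (M : ℤ) (ks : ℕ → ℤ) : Prop :=
  StrictAnti ks ∧ ∃ n0 : ℕ, ∀ i : ℕ, n0 ≤ i → ks i = M - i

def mayaBound {M : ℤ} {ks : ℕ → ℤ} (h : MayaP M ks) : ℕ := h.2.choose

/-- the normally ordered semi-infinite wedge `u_{k_1} ∧ u_{k_2} ∧ ⋯` in `F_M` -/
def mayaVec (M : ℤ) (Tc : (m : ℕ) → ℕ → Module.End K (W L N m)) {ks : ℕ → ℤ}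
    (h : MayaP M ks) : Fock L N M Tc :=
  iq L N M Tc (mayaBound h) (bs L (ZMod N) (mayaBound h) fun j => uIdx L N (ks (j : ℕ)))

/-- the degree of a semi-infinite wedge -/
def degMaya (M : ℤ) {ks : ℕ → ℤ} (h : MayaP M ks) : ℤ :=
  ∑ i ∈ Finset.range (mayaBound h), (mRep L N (M - i) - mRep L N (ks i))

/-- the degree-`d` part of the Fock space -/
def FockD (M : ℤ) (Tc : (m : ℕ) → ℕ → Module.End K (W L N m)) (d : ℤ) :
    Submodule K (Fock L N M Tc) :=
  Submodule.span K {v | ∃ (ks : ℕ → ℤ) (h : MayaP M ks),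
    degMaya L N M h = d ∧ v = mayaVec L N M Tc h}

/-- the subspace `V_{M,n}^d ⊂ ∧ⁿ V_aff` -/
def Vd (M : ℤ) (Tc : ℕ → Module.End K (W L N n)) (d : ℤ) :
    Submodule K (WedgeSp L N n Tc) :=
  Submodule.span K
    {w | ∃ ks : Fin n → ℤ, StrictAnti ks ∧
      (∀ h : 0 < n, mRep L N (ks ⟨n - 1, by omega⟩) ≤ mRep L N (M - ((n : ℤ) - 1))) ∧
      (∑ j : Fin n, (mRep L N (M - (j : ℕ)) - mRep L N (ks j))) = d ∧
      w = wedgeV L N n Tc ks}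

end nsector

section chars

variable (L N : ℕ) (M : ℤ) (Tc : (m : ℕ) → ℕ → Module.End K (W L N m))

/-- `M - n = -NLm`, i.e. the tail of `iq n` is the vacuum `|-NLm⟩` -/
def Aligned (nn : ℕ) (m : ℤ) : Prop :=
  (M : ℤ) - (nn : ℤ) = -((N : ℤ) * (L : ℤ)) * m

def CharK (KF : ZMod N → Module.End K (Fock L N M Tc)) : Prop :=
  ∀ (i : ZMod N) (nn : ℕ) (m : ℤ), Aligned L N M nn m → ∀ v : W L N nn,
    KF i (iq L N M Tc nn v) =
      (q ^ ((L : ℤ) * indZ i 0) : K) • iq L N M Tc nn (KOp L N nn i v)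

def CharKi (KiF : ZMod N → Module.End K (Fock L N M Tc)) : Prop :=
  ∀ (i : ZMod N) (nn : ℕ) (m : ℤ), Aligned L N M nn m → ∀ v : W L N nn,
    KiF i (iq L N M Tc nn v) =
      (q ^ (-((L : ℤ) * indZ i 0)) : K) • iq L N M Tc nn (KInv L N nn i v)

def CharE (EF : ZMod N → Module.End K (Fock L N M Tc)) : Prop :=
  ∀ (i : ZMod N) (nn : ℕ) (m : ℤ), Aligned L N M nn m → ∀ v : W L N nn,
    EF i (iq L N M Tc nn v) =
      (q ^ ((L : ℤ) * indZ i 0) : K) • iq L N M Tc nn (EOp L N nn i v)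

def CharF (FF : ZMod N → Module.End K (Fock L N M Tc)) : Prop :=
  ∀ (i : ZMod N) (nn : ℕ) (m : ℤ), Aligned L N M nn m → ∀ v : W L N nn,
    (i ≠ 0 → FF i (iq L N M Tc nn v) = iq L N M Tc nn (FOp L N nn i v)) ∧
    FF 0 (iq L N M Tc nn v) =
      iq L N M Tc nn (FOp L N nn 0 v) +
        iq L N M Tc (nn + N * L)
          (concat L N (KInv L N nn 0 v) (FOp L N (N * L) 0 (vacBlock L N m)))

def CharD (DF : Module.End K (Fock L N M Tc)) : Prop :=
  ∀ (nn : ℕ) (m : ℤ), Aligned L N M nn m → ∀ v : W L N nn,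
    DF (iq L N M Tc nn v) =
      iq L N M Tc nn (DOp L (ZMod N) nn v) +
        ((((N : ℤ) * (L : ℤ) * (m * (1 - m))) / 2 : ℤ) : K) • iq L N M Tc nn v

def CharKd (KdF : ZMod L → Module.End K (Fock L N M Tc)) : Prop :=
  ∀ (a : ZMod L) (nn : ℕ) (m : ℤ), Aligned L N M nn m → ∀ v : W L N nn,
    KdF a (iq L N M Tc nn v) =
      (q ^ ((N : ℤ) * indZ a 0) : K) • iq L N M Tc nn (KdOp L (ZMod N) nn a v)

def CharKdi (KdiF : ZMod L → Module.End K (Fock L N M Tc)) : Prop :=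
  ∀ (a : ZMod L) (nn : ℕ) (m : ℤ), Aligned L N M nn m → ∀ v : W L N nn,
    KdiF a (iq L N M Tc nn v) =
      (q ^ (-((N : ℤ) * indZ a 0)) : K) • iq L N M Tc nn (KdInv L (ZMod N) nn a v)

def CharEd (EdF : ZMod L → Module.End K (Fock L N M Tc)) : Prop :=
  ∀ (a : ZMod L) (nn : ℕ) (m : ℤ), Aligned L N M nn m → ∀ v : W L N nn,
    EdF a (iq L N M Tc nn v) = iq L N M Tc nn (EdOp L (ZMod N) nn a v)

def CharFd (FdF : ZMod L → Module.End K (Fock L N M Tc)) : Prop :=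
  ∀ (a : ZMod L) (nn : ℕ) (m : ℤ), Aligned L N M nn m → ∀ v : W L N nn,
    (a ≠ 0 → FdF a (iq L N M Tc nn v) = iq L N M Tc nn (FdOp L (ZMod N) nn a v)) ∧
    FdF 0 (iq L N M Tc nn v) =
      (q ^ (-(N : ℤ)) : K) • iq L N M Tc nn (FdOp L (ZMod N) nn 0 v) +
        (q ^ (-(N : ℤ)) : K) • iq L N M Tc (nn + N * L)
          (concat L N v (FdOp L (ZMod N) (N * L) 0 (vacBlock L N m)))

def CharDd (DdF : Module.End K (Fock L N M Tc)) : Prop :=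
  CharD L N M Tc DdF

def CharB (BF : ℤ → Module.End K (Fock L N M Tc)) : Prop :=
  ∀ (r : ℤ), r ≠ 0 → ∀ (nn : ℕ) (m : ℤ), Aligned L N M nn m → ∀ v : W L N nn,
    BF r (iq L N M Tc nn v) =
      iq L N M Tc (nn + N * L * r.natAbs)
        (Ball L (ZMod N) (nn + N * L * r.natAbs) r
          (padW L N M nn (nn + N * L * r.natAbs) v))

end chars

/-- the defining relations of `U_q(sl_Mz-hat)` for a family of operators -/
def UqRels (Mz : ℕ) {V : Type} [AddCommGroup V] [Module K V]
    (E F Kk Ki : ZMod Mz → Module.End K V) (D : Module.End K V) : Prop :=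
  (∀ i j, Kk i * Kk j = Kk j * Kk i) ∧
  (∀ i, Kk i * Ki i = 1 ∧ Ki i * Kk i = 1) ∧
  (∀ i, D * Kk i = Kk i * D) ∧
  (∀ i j, Kk i * E j = (q ^ aijZ Mz i j : K) • (E j * Kk i)) ∧
  (∀ i j, Kk i * F j = (q ^ (-aijZ Mz i j) : K) • (F j * Kk i)) ∧
  (∀ i, D * E i - E i * D = (if i = 0 then (1 : K) else 0) • E i) ∧
  (∀ i, D * F i - F i * D = (if i = 0 then (-1 : K) else 0) • F i) ∧
  (∀ i j, E i * F j - F j * E i =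
    (if i = j then (1 : K) else 0) • ((q - q⁻¹)⁻¹ • (Kk i - Ki i))) ∧
  (∀ i j, i ≠ j →
    ∑ k ∈ Finset.range ((1 - aijZ Mz i j).toNat + 1),
      ((-1 : K) ^ k * qbinom (1 - aijZ Mz i j).toNat k) •
        (E i ^ ((1 - aijZ Mz i j).toNat - k) * E j * E i ^ k) = 0) ∧
  (∀ i j, i ≠ j →
    ∑ k ∈ Finset.range ((1 - aijZ Mz i j).toNat + 1),
      ((-1 : K) ^ k * qbinom (1 - aijZ Mz i j).toNat k) •
        (F i ^ ((1 - aijZ Mz i j).toNat - k) * F j * F i ^ k) = 0)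

/-- integrability of a pair of families `E_i`, `F_i` -/
def IntegrableRels (Mz : ℕ) {V : Type} [AddCommGroup V] [Module K V]
    (E F : ZMod Mz → Module.End K V) : Prop :=
  ∀ (w : V) (i : ZMod Mz),
    (∃ r : ℕ, 1 ≤ r ∧ (E i ^ r) w = 0) ∧ (∃ r : ℕ, 1 ≤ r ∧ (F i ^ r) w = 0)


/-!
Let `v = x + s x` for a monomial `x` whose two factors carry the same colours. On such
vectors `s R(z₁, z₂)` acts as `q² z₂ - z₁`, so the defining relation of `T^c` collapses to
`(z₁ - z₂)(q² z₂ - z₁)(T^c + 1) v = 0`. Both `z₁ - z₂` and `q² z₂ - z₁` are non-zero-divisors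
(look at the monomial with the largest `z₁`-degree minus `z₂`-degree), hence `T^c v = -v`,
while `T^s v = q² v`. Since `-1 ≠ q²`, `v = (T^c - T^s)(-(1 + q²)⁻¹ v)` vanishes in `∧² V_aff`.
-/

theorem _root_.Finsupp.eq_zero_of_smul_mapDomain_add_smul_mapDomain_eq_zero
    {R G β : Type*} [Semiring R] [NoZeroDivisors R] [LinearOrder β]
    {σ τ : G → G} (hσ : Function.Injective σ) (φ : G → β)
    (hφσ : ∀ g, φ g < φ (σ g)) (hφτ : ∀ g, φ (τ g) ≤ φ g)
    {c d : R} (hc : c ≠ 0) {x : G →₀ R}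
    (h : c • x.mapDomain σ + d • x.mapDomain τ = 0) : x = 0 := by
  classical
  by_contra hx
  obtain ⟨g, hg, hmax⟩ := x.support.exists_max_image φ (Finsupp.support_nonempty_iff.mpr hx)
  have hτ : x.mapDomain τ (σ g) = 0 := by
    by_contra hne
    obtain ⟨g', hg', hτg'⟩ :=
      Finset.mem_image.mp (Finsupp.mapDomain_support (Finsupp.mem_support_iff.mpr hne))
    have hlt := (hφτ g').trans_lt ((hmax g' hg').trans_lt (hφσ g))
    rw [hτg'] at hlt
    exact lt_irrefl _ hlt
  have hcoeff := congrArg (· (σ g)) h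
  simp only [Finsupp.add_apply, Finsupp.smul_apply, Finsupp.mapDomain_apply hσ, hτ,
    smul_eq_mul, mul_zero, add_zero, Finsupp.coe_zero, Pi.zero_apply] at hcoeff
  exact Finsupp.mem_support_iff.mp hg ((mul_eq_zero.mp hcoeff).resolve_left hc)

theorem _root_.LinearMap.mem_range_sub_of_apply_eq_smul {k V : Type*} [DivisionRing k]
    [AddCommGroup V] [Module k V] {f g : Module.End k V} {x : V} {a b : k} (hab : a ≠ b)
    (hf : f x = a • x) (hg : g x = b • x) : x ∈ LinearMap.range (f - g) :=
  ⟨(a - b)⁻¹ • x, by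
    rw [map_smul, LinearMap.sub_apply, hf, hg, ← sub_smul, smul_smul,
      inv_mul_cancel₀ (sub_ne_zero.mpr hab), one_smul]⟩

lemma q_sq_ne_neg_one : q ^ 2 ≠ -1 := by
  rw [q, ← RatFunc.algebraMap_X, ← map_pow, ← map_one (algebraMap (Polynomial ℚ) K),
    ← map_neg, Ne, (IsFractionRing.injective (Polynomial ℚ) K).eq_iff]
  intro h
  simpa using congrArg (Polynomial.eval 0) h

section sites

variable {L : ℕ} {C : Type} {n : ℕ}

lemma lift_bs {V : Type} [AddCommGroup V] [Module K V] (h : (Fin n → Idx L C) → V)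
    (g : Fin n → Idx L C) : lift L C n h (bs L C n g) = h g := by
  simp [lift, bs]

lemma zmF_bs (j : Fin n) (m : ℤ) (g : Fin n → Idx L C) :
    zmF L C n j m (bs L C n g) = bs L C n (zI L C n g j m) := by
  simp [zmF, bs, Finsupp.mapDomain_single]

lemma SopF_bs (i j : Fin n) (g : Fin n → Idx L C) :
    SopF L C n i j (bs L C n g) = bs L C n (swapZL L C n g i j) := by
  simp [SopF, bs, Finsupp.mapDomain_single]

lemma zI_injective (j : Fin n) (m : ℤ) : Function.Injective fun g => zI L C n g j m := by
  intro g g' h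
  simpa [zI] using congrArg (fun g => zI L C n g j (-m)) h

lemma eq_zero_of_smul_zmF_add_smul_zmF_eq_zero {i j : Fin n} (hij : i ≠ j) {c d : K}
    (hc : c ≠ 0) {x : Sp L C n} (h : c • zmF L C n i 1 x + d • zmF L C n j 1 x = 0) : x = 0 :=
  Finsupp.eq_zero_of_smul_mapDomain_add_smul_mapDomain_eq_zero (zI_injective i 1)
    (fun g => (g i).1 - (g j).1) (fun g => by simp [zI, hij.symm])
    (fun g => by simp [zI, hij]; omega) hc h

lemma IsTcAt.apply_eq_neg {i j : Fin n} {T : Module.End K (Sp L C n)}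
    (hT : IsTcAt L C n i j T) (hij : i ≠ j) {x : Sp L C n}
    (hx : ((q ^ 2 • zmF L C n j 1 - zmF L C n i 1) - SopF L C n i j * RopF L C n i j) x = 0) :
    T x = -x := by
  have h := LinearMap.congr_fun hT x
  simp only [Module.End.mul_apply, hx, map_zero] at h
  have hB : (q ^ 2 • zmF L C n j 1 - zmF L C n i 1) ((T + 1) x) = 0 :=
    eq_zero_of_smul_zmF_add_smul_zmF_eq_zero hij one_ne_zero (d := -1)
      (by rwa [one_smul, neg_one_smul, ← sub_eq_add_neg, ← LinearMap.sub_apply])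
  have hT1 : (T + 1) x = 0 :=
    eq_zero_of_smul_zmF_add_smul_zmF_eq_zero hij (neg_ne_zero.mpr one_ne_zero) (d := q ^ 2)
      (by rwa [neg_one_smul, neg_add_eq_sub, ← LinearMap.smul_apply, ← LinearMap.sub_apply])
  rw [LinearMap.add_apply, Module.End.one_apply] at hT1
  exact eq_neg_of_add_eq_zero_left hT1

lemma swapZL_zI_left {i j : Fin n} (hij : i ≠ j) (g : Fin n → Idx L C) (m : ℤ) :
    swapZL L C n (zI L C n g i m) i j = zI L C n (swapZL L C n g i j) j m := by
  have hji := hij.symm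
  funext t
  by_cases hti : t = i <;> by_cases htj : t = j <;> simp_all [swapZL, zI, Function.update]

lemma swapZL_zI_right {i j : Fin n} (hij : i ≠ j) (g : Fin n → Idx L C) (m : ℤ) :
    swapZL L C n (zI L C n g j m) i j = zI L C n (swapZL L C n g i j) i m := by
  have hji := hij.symm
  funext t
  by_cases hti : t = i <;> by_cases htj : t = j <;> simp_all [swapZL, zI, Function.update]

lemma swapZL_swapZL (g : Fin n → Idx L C) (i j : Fin n) :
    swapZL L C n (swapZL L C n g i j) i j = g := by
  funext t
  by_cases hti : t = i <;> by_cases htj : t = j <;> by_cases hij : i = j <;>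
    simp_all [swapZL, Ne.symm]

lemma RopF_bs_of_colour_eq {i j : Fin n} {g : Fin n → Idx L C} (hg : (g i).2.1 = (g j).2.1) :
    RopF L C n i j (bs L C n g) =
      q ^ 2 • bs L C n (zI L C n g i 1) - bs L C n (zI L C n g j 1) := by
  rw [RopF, lift_bs, if_pos hg]

lemma SopF_mul_RopF_bs_of_colour_eq {i j : Fin n} (hij : i ≠ j) {g : Fin n → Idx L C}
    (hg : (g i).2.1 = (g j).2.1) :
    (SopF L C n i j * RopF L C n i j) (bs L C n g) =
      (q ^ 2 • zmF L C n j 1 - zmF L C n i 1) (bs L C n (swapZL L C n g i j)) := by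
  rw [Module.End.mul_apply, RopF_bs_of_colour_eq hg, map_sub, map_smul, SopF_bs, SopF_bs,
    swapZL_zI_left hij, swapZL_zI_right hij, LinearMap.sub_apply, LinearMap.smul_apply,
    zmF_bs, zmF_bs]

lemma apply_bs_add_bs_swapZL_eq_zero {i j : Fin n} (hij : i ≠ j) {g : Fin n → Idx L C}
    (hg : (g i).2.1 = (g j).2.1) :
    ((q ^ 2 • zmF L C n j 1 - zmF L C n i 1) - SopF L C n i j * RopF L C n i j)
      (bs L C n g + bs L C n (swapZL L C n g i j)) = 0 := by
  have hg' : (swapZL L C n g i j i).2.1 = (swapZL L C n g i j j).2.1 := by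
    simp [swapZL, hij.symm, hg]
  rw [LinearMap.sub_apply, map_add, map_add, SopF_mul_RopF_bs_of_colour_eq hij hg,
    SopF_mul_RopF_bs_of_colour_eq hij hg', swapZL_swapZL]
  abel

end sites

section wedge

variable {L N n : ℕ}

lemma TsF_bs_of_colour_eq {i j : Fin n} {g : Fin n → Idx L (ZMod N)}
    (hg : (g i).2.2 = (g j).2.2) :
    TsF L N n i j (bs L (ZMod N) n g) = q ^ 2 • bs L (ZMod N) n g := by
  rw [TsF, lift_bs, if_pos hg]

lemma bs_add_bs_swapZL_mem_Jmod {Tc : ℕ → Module.End K (W L N n)}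
    (hTc : HTc L (ZMod N) n Tc) (t : ℕ) (ht : t + 1 < n) {g : Fin n → Idx L (ZMod N)}
    (hL : (g ⟨t, by omega⟩).2.1 = (g ⟨t + 1, ht⟩).2.1)
    (hN : (g ⟨t, by omega⟩).2.2 = (g ⟨t + 1, ht⟩).2.2) :
    bs L (ZMod N) n g + bs L (ZMod N) n (swapZL L (ZMod N) n g ⟨t, by omega⟩ ⟨t + 1, ht⟩)
      ∈ Jmod L N n Tc := by
  set i : Fin n := ⟨t, by omega⟩
  set j : Fin n := ⟨t + 1, ht⟩
  have hij : i ≠ j := by simp [i, j]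
  have hN' : (swapZL L (ZMod N) n g i j i).2.2 = (swapZL L (ZMod N) n g i j j).2.2 := by
    simp [swapZL, hij.symm, hN]
  set v := bs L (ZMod N) n g + bs L (ZMod N) n (swapZL L (ZMod N) n g i j)
  have hTcv : Tc t v = (-1 : K) • v :=
    ((hTc t ht).apply_eq_neg hij (apply_bs_add_bs_swapZL_eq_zero hij hL)).trans
      (neg_one_smul K v).symm
  have hTsv : TsT L N n t v = q ^ 2 • v := by
    rw [TsT, dif_pos ht, map_add, TsF_bs_of_colour_eq hN, TsF_bs_of_colour_eq hN', smul_add]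
  exact le_iSup (fun s : Fin (n - 1) => LinearMap.range (Tc s - TsT L N n s)) ⟨t, by omega⟩
    (LinearMap.mem_range_sub_of_apply_eq_smul (Ne.symm q_sq_ne_neg_one) hTcv hTsv)

end wedge

/-- `z^m e_a v_ε` is encoded by the triple `(m, a mod L, ε mod N)`. -/
theorem statement_3_general (L N : ℕ)
    (Tc : ℕ → Module.End K (W L N 2)) (hTc : HTc L (ZMod N) 2 Tc)
    (ε a : ℕ) (m1 m2 : ℤ) :
    wedgeB L N 2 Tc ![(m1, (a : ZMod L), (ε : ZMod N)), (m2, (a : ZMod L), (ε : ZMod N))] =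
      - wedgeB L N 2 Tc
          ![(m2, (a : ZMod L), (ε : ZMod N)), (m1, (a : ZMod L), (ε : ZMod N))] := by
  rw [eq_neg_iff_add_eq_zero, wedgeB, wedgeB, ← Submodule.Quotient.mk_add,
    Submodule.Quotient.mk_eq_zero]
  convert bs_add_bs_swapZL_mem_Jmod hTc 0 one_lt_two
    (g := ![(m1, (a : ZMod L), (ε : ZMod N)), (m2, (a : ZMod L), (ε : ZMod N))]) rfl rfl using 3
  funext t
  fin_cases t <;> rfl

/-- the first normal ordering rule in `∧² V_aff`:
`u_{ε-N(a+Lm₁)} ∧ u_{ε-N(a+Lm₂)} = - u_{ε-N(a+Lm₂)} ∧ u_{ε-N(a+Lm₁)}` for `m₁ ≥ m₂`.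
Here `z^m e_a v_ε` is encoded by the triple `(m, a mod L, ε mod N)`. -/
theorem statement_3 (L N : ℕ) [NeZero L] [NeZero N]
    (Tc : ℕ → Module.End K (W L N 2)) (hTc : HTc L (ZMod N) 2 Tc)
    (ε a : ℕ) (hε1 : 1 ≤ ε) (hε2 : ε ≤ N) (ha1 : 1 ≤ a) (ha2 : a ≤ L)
    (m1 m2 : ℤ) (hm : m2 ≤ m1) :
    wedgeB L N 2 Tc ![(m1, (a : ZMod L), (ε : ZMod N)), (m2, (a : ZMod L), (ε : ZMod N))] =
      - wedgeB L N 2 Tc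
          ![(m2, (a : ZMod L), (ε : ZMod N)), (m1, (a : ZMod L), (ε : ZMod N))] :=
  statement_3_general L N Tc hTc ε a m1 m2

end QT
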